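/- arXiv:2401.12465 — 2 statements merged into one kernel-verified Lean document; each statement's English description precedes it below -/
import Mathlib

section
/- Pliss Lemma: Let a_1,...,a_k be real numbers with a_i ≤ C for all i, and suppose that a_1 + ... + a_k ≥ k·χ₁. Then for any χ₂ < χ₁ (with χ₂ < C), there exist indices 1 ≤ j_1 < j_2 < ... < j_l ≤ k such that l/k ≥ (χ₁ − χ₂)/(C − χ₂), and for each 1 ≤ n ≤ l and each 1 ≤ m ≤ j_n one has a_m + a_{m+1} + ... + a_{j_n} ≥ (j_n − m + 1)·χ₂. -/
/-!
With `b i = a i - χ₂` and partial sums `S n = b 1 + ⋯ + b n`, the Pliss times are exactly the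
record times of `S`: the `j` with `S t ≤ S j` for all `t < j`. The sum `S` grows by at most
`C - χ₂` per step, and at a non-record time it lies below an earlier value, so
`S n ≤ (C - χ₂) · #{record times ≤ n}`. At `n = k` the left side is at least
`k (χ₁ - χ₂)`.
-/

open Finset

theorem sum_Icc_one_add_sum_Icc {M : Type*} [AddCommMonoid M] (b : ℕ → M) {m j : ℕ}
    (hmj : m ≤ j) :
    ∑ i ∈ Icc 1 m, b i + ∑ i ∈ Icc (m + 1) j, b i = ∑ i ∈ Icc 1 j, b i := by
  have hIcc_one : ∀ n, Icc 1 n = Ioc 0 n := Icc_add_one_left_eq_Ioc 0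
  rw [hIcc_one, hIcc_one, Icc_add_one_left_eq_Ioc]
  exact sum_Ioc_consecutive b (Nat.zero_le m) hmj

section RecordTimes

variable {α : Type*} [AddCommGroup α] [LinearOrder α] [IsOrderedAddMonoid α]

def IsRecordTime (S : ℕ → α) (j : ℕ) : Prop := ∀ t < j, S t ≤ S j

open scoped Classical in
theorem le_add_card_recordTimes_nsmul {S : ℕ → α} {D : α} (hD : 0 ≤ D) {n : ℕ}
    (hstep : ∀ i < n, S (i + 1) ≤ S i + D) :
    S n ≤ S 0 + #{j ∈ Icc 1 n | IsRecordTime S j} • D := by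
  induction n using Nat.strong_induction_on with
  | _ n ih =>
  obtain _ | m := n
  · simp
  by_cases hrec : IsRecordTime S (m + 1)
  · have hcard : #{j ∈ Icc 1 (m + 1) | IsRecordTime S j} =
        #{j ∈ Icc 1 m | IsRecordTime S j} + 1 := by
      rw [← insert_Icc_right_eq_Icc_add_one (by omega), filter_insert, if_pos hrec,
        card_insert_of_notMem (by simp)]
    calc S (m + 1) ≤ S m + D := hstep m (by omega)
      _ ≤ S 0 + #{j ∈ Icc 1 m | IsRecordTime S j} • D + D :=
        add_le_add_left (ih m (by omega) fun i hi => hstep i (by omega)) D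
      _ = S 0 + #{j ∈ Icc 1 (m + 1) | IsRecordTime S j} • D := by
        rw [hcard, succ_nsmul, add_assoc]
  · obtain ⟨t, ht, hlt⟩ : ∃ t < m + 1, S (m + 1) < S t := by
      simpa [IsRecordTime] using hrec
    calc S (m + 1) ≤ S t := hlt.le
      _ ≤ S 0 + #{j ∈ Icc 1 t | IsRecordTime S j} • D :=
        ih t ht fun i hi => hstep i (by omega)
      _ ≤ S 0 + #{j ∈ Icc 1 (m + 1) | IsRecordTime S j} • D := by
        gcongr

theorem sum_Icc_nonneg_of_isRecordTime {b : ℕ → α} {m j : ℕ}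
    (hj : IsRecordTime (fun n => ∑ i ∈ Icc 1 n, b i) j) (hmj : m < j) :
    0 ≤ ∑ i ∈ Icc (m + 1) j, b i := by
  have hrec : ∑ i ∈ Icc 1 m, b i ≤ ∑ i ∈ Icc 1 j, b i := hj m hmj
  rwa [← sum_Icc_one_add_sum_Icc b hmj.le, le_add_iff_nonneg_right] at hrec

end RecordTimes

/-- **Pliss Lemma.** Given reals `a 1, ..., a k` bounded above by `C` whose sum is at least
`k * χ₁`, and any `χ₂ < χ₁` with `χ₂ < C`, there is a nonempty set `J ⊆ {1,...,k}` of
"Pliss times" with density at least `(χ₁ - χ₂)/(C - χ₂)` such that every backward partial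
sum ending at a Pliss time `jn` averages at least `χ₂`. -/
theorem pliss_lemma (k : ℕ) (hk : 0 < k) (a : ℕ → ℝ) (C χ₁ χ₂ : ℝ)
    (hC : ∀ i, 1 ≤ i → i ≤ k → a i ≤ C)
    (hsum : (k : ℝ) * χ₁ ≤ ∑ i ∈ Finset.Icc 1 k, a i)
    (h12 : χ₂ < χ₁) (h2C : χ₂ < C) :
    ∃ J : Finset ℕ, J.Nonempty ∧ J ⊆ Finset.Icc 1 k ∧
      (χ₁ - χ₂) / (C - χ₂) ≤ (J.card : ℝ) / (k : ℝ) ∧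
      ∀ jn ∈ J, ∀ m, 1 ≤ m → m ≤ jn →
        ((jn : ℝ) - (m : ℝ) + 1) * χ₂ ≤ ∑ i ∈ Finset.Icc m jn, a i := by
  classical
  set S : ℕ → ℝ := fun n => ∑ i ∈ Icc 1 n, (a i - χ₂)
  set J := {j ∈ Icc 1 k | IsRecordTime S j}
  have hD : 0 < C - χ₂ := sub_pos.mpr h2C
  have hstep : ∀ i < k, S (i + 1) ≤ S i + (C - χ₂) := fun i hi => by
    simp only [S, sum_Icc_succ_top (Nat.le_add_left 1 i)]
    linarith [hC (i + 1) (by omega) hi]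
  have hcount : S k ≤ #J * (C - χ₂) := by
    have hS0 : S 0 = 0 := by simp [S]
    simpa only [hS0, zero_add, nsmul_eq_mul] using le_add_card_recordTimes_nsmul hD.le hstep
  have hSk : k * (χ₁ - χ₂) ≤ S k := by
    simp only [S, sum_sub_distrib, sum_const, Nat.card_Icc, nsmul_eq_mul]
    push_cast
    linarith
  have hk' : (0 : ℝ) < k := by exact_mod_cast hk
  have hdensity : (χ₁ - χ₂) / (C - χ₂) ≤ #J / k := by
    rw [div_le_div_iff₀ hD hk']
    linarith
  refine ⟨J, card_pos.mp ?_, filter_subset _ _, hdensity, ?_⟩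
  · have hJpos : (0 : ℝ) < #J := by nlinarith
    exact_mod_cast hJpos
  · intro j hj m hm hmj
    obtain ⟨m, rfl⟩ : ∃ m', m = m' + 1 := ⟨m - 1, by omega⟩
    have hnonneg := sum_Icc_nonneg_of_isRecordTime (mem_filter.1 hj).2 (by omega : m < j)
    rw [sum_sub_distrib, sum_const, Nat.card_Icc, Nat.add_sub_add_right, nsmul_eq_mul,
      Nat.cast_sub (by omega)] at hnonneg
    push_cast
    linarith
end

section
/- Entropy of measures supported on the vanishing-exponent set: if ν is an f-invariant ergodic Borel probability measure with ν(R) = 1 for some f-invariant set R, then h_ν(f) ≤ h_top(f, R), where h_top(f,·) is Bowen's dimension-like topological entropy and h_ν(f) is the Katok metric entropy defined via minimal cardinalities of Bowen-ball covers of sets of measure at least δ. -/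
open Filter Set

/-- The `(n,ε)`-Bowen ball of `f` centered at `x`. -/
def bowenBall {X : Type*} [MetricSpace X] (f : X → X) (n : ℕ) (ε : ℝ) (x : X) : Set X :=
  {y | ∀ i < n, dist (f^[i] x) (f^[i] y) < ε}

/-- The quantity `m_{ε,h}(Y)`: limit as `n → ∞` (equivalently, supremum over `n`, by
monotonicity) of the infimum of `Σ_i e^{-h n_i}` over countable covers of `Y` by Bowen balls
`B_{n_i}(x_i, ε)` with `n_i ≥ n`. -/
noncomputable def mBowen {X : Type*} [MetricSpace X] (f : X → X) (ε h : ℝ) (Y : Set X) :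
    ENNReal :=
  ⨆ N : ℕ, sInf {s : ENNReal | ∃ (c : ℕ → X) (m : ℕ → ℕ),
    (∀ i, N ≤ m i) ∧ Y ⊆ ⋃ i, bowenBall f (m i) ε (c i) ∧
    s = ∑' i, ENNReal.ofReal (Real.exp (-h * (m i : ℝ)))}

/-- `h_top(f, Y, ε) = inf {h : m_{ε,h}(Y) = 0}`. -/
noncomputable def bowenEntropyAt {X : Type*} [MetricSpace X] (f : X → X) (ε : ℝ) (Y : Set X) :
    EReal :=
  sInf ((fun h : ℝ => (h : EReal)) '' {h : ℝ | mBowen f ε h Y = 0})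

/-- Bowen's dimension-like topological entropy of `f` on the (possibly non-compact) set `Y`:
the limit as `ε → 0` (equivalently, supremum over `ε > 0`, by monotonicity) of
`h_top(f, Y, ε)`. -/
noncomputable def bowenEntropy {X : Type*} [MetricSpace X] (f : X → X) (Y : Set X) : EReal :=
  ⨆ (ε : ℝ) (_ : 0 < ε), bowenEntropyAt f ε Y


open MeasureTheory

/-- `s(n, ε, δ)`: the minimal number of `(n,ε)`-Bowen balls whose union has `ν`-measure at
least `δ`. -/
noncomputable def spanCount {X : Type*} [MetricSpace X] [MeasurableSpace X] (f : X → X) (ν : Measure X)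
    (n : ℕ) (ε δ : ℝ) : ℕ :=
  sInf {m : ℕ | ∃ c : Fin m → X, ENNReal.ofReal δ ≤ ν (⋃ i, bowenBall f n ε (c i))}

/-- Katok's metric entropy of the ergodic measure `ν` (with parameter `δ ∈ (0,1)`):
`lim_{ε→0} limsup_n (1/n) log s(n,ε,δ)` (the limit as `ε → 0` being a supremum over `ε > 0`,
by monotonicity). -/
noncomputable def katokEntropy {X : Type*} [MetricSpace X] [MeasurableSpace X] (f : X → X) (ν : Measure X)
    (δ : ℝ) : EReal :=
  ⨆ (ε : ℝ) (_ : 0 < ε),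
    limsup (fun n : ℕ => (((n : ℝ)⁻¹ * Real.log (spanCount f ν n ε δ) : ℝ) : EReal)) atTop


/-!
Fix `ε` and `h` with `m_{ε/2,h}(R) = 0`. Then `R` is covered by Bowen balls `B_{m_i}(c_i, ε/2)`
with `∑ e^{-h m_i} ≤ 1/2`, and as `ν R = 1` a finite subfamily covers all but measure `β`; the
uncovered part `D` is covered by `P` ordinary `ε/2`-balls, used as Bowen balls of length one.
Cutting an orbit segment of length `n` greedily into such blocks gives a word of weight at least
`(2P)^{-k} e^{-h(n+L)}` when the orbit visits `D` at most `k` times; by a Kraft-type inequality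
there are at most `(n+1)/κ` words of weight `≥ κ`, and points with the same word are
`(n,ε)`-close. By Markov's inequality for the Birkhoff sum of `1_D`, the orbits visiting `D` at
most `⌈a n⌉` times have measure `≥ δ` when `β = (1 - δ) a`. Hence
`s(n, ε, δ) ≤ (n+1) (2P)^{a n + 1} e^{h(n+L)}`, a growth rate of `h + a log 2P` for every `a > 0`.
-/
open Topology
open scoped ENNReal

section BowenBall

variable {X : Type*} [MetricSpace X] {f : X → X} {n : ℕ} {ε : ℝ}

theorem isOpen_bowenBall (hf : Continuous f) (x : X) : IsOpen (bowenBall f n ε x) := by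
  have : bowenBall f n ε x = ⋂ i ∈ Finset.range n, f^[i] ⁻¹' Metric.ball (f^[i] x) ε := by
    ext y
    simp [bowenBall, dist_comm]
  rw [this]
  exact isOpen_biInter_finset fun i _ => Metric.isOpen_ball.preimage (hf.iterate i)

theorem mem_bowenBall_one {x y : X} : y ∈ bowenBall f 1 ε x ↔ dist x y < ε := by
  simp [bowenBall]

theorem dist_iterate_lt_of_mem_bowenBall {x y z : X} (hy : y ∈ bowenBall f n ε x)
    (hz : z ∈ bowenBall f n ε x) {i : ℕ} (hi : i < n) : dist (f^[i] y) (f^[i] z) < 2 * ε := by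
  linarith [dist_triangle_left (f^[i] y) (f^[i] z) (f^[i] x), hy i hi, hz i hi]

variable [MeasurableSpace X] {ν : Measure X} {δ : ℝ} {M : ℕ} {c : Fin M → X}

theorem spanCount_le (hc : ENNReal.ofReal δ ≤ ν (⋃ i, bowenBall f n ε (c i))) :
    spanCount f ν n ε δ ≤ M :=
  Nat.sInf_le ⟨c, hc⟩

theorem spanCount_pos (hδ : 0 < δ) (hc : ENNReal.ofReal δ ≤ ν (⋃ i, bowenBall f n ε (c i))) :
    0 < spanCount f ν n ε δ := by
  refine Nat.pos_of_ne_zero fun h0 => ?_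
  rcases Nat.sInf_eq_zero.1 h0 with ⟨c₀, hc₀⟩ | hempty
  · rw [iUnion_of_empty, measure_empty] at hc₀
    exact (ENNReal.ofReal_pos.2 hδ).not_ge hc₀
  · exact hempty.subset ⟨c, hc⟩

end BowenBall

theorem add_birkhoffSum_sub_le {α M : Type*} [AddCommMonoid M] [PartialOrder M]
    [CanonicallyOrderedAdd M] (f : α → α) (g : α → M) {n L : ℕ} (hn : 0 < n) (hL : 0 < L)
    (x : α) : g x + birkhoffSum f g (n - L) (f^[L] x) ≤ birkhoffSum f g n x := by
  obtain hLn | hnL := le_or_gt L n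
  · obtain ⟨l, rfl⟩ := Nat.exists_eq_add_of_lt hL
    rw [← Nat.add_sub_cancel' hLn, birkhoffSum_add, Nat.add_sub_cancel_left, zero_add,
      birkhoffSum_succ']
    gcongr
    exact le_self_add
  · obtain ⟨k, rfl⟩ := Nat.exists_eq_add_of_lt hn
    rw [Nat.sub_eq_zero_of_le hnL.le, birkhoffSum_zero, add_zero, zero_add, birkhoffSum_succ']
    exact le_self_add

section Itinerary

variable {X A : Type*} (f : X → X) (len : A → ℕ+) (sel : X → A)

def itinerary : ℕ → X → List A
  | 0, _ => []
  | n + 1, x => sel x :: itinerary (n + 1 - len (sel x)) (f^[len (sel x)] x)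
termination_by n => n
decreasing_by exact Nat.sub_lt n.succ_pos (len (sel x)).pos

variable {f len sel}

@[simp]
theorem itinerary_zero (x : X) : itinerary f len sel 0 x = [] := by
  rw [itinerary]

theorem itinerary_succ (n : ℕ) (x : X) : itinerary f len sel (n + 1) x =
    sel x :: itinerary f len sel (n + 1 - len (sel x)) (f^[len (sel x)] x) := by
  rw [itinerary]

theorem length_itinerary_le (n : ℕ) (x : X) : (itinerary f len sel n x).length ≤ n := by
  induction n using Nat.strong_induction_on generalizing x with
  | _ n ih =>
    cases n with
    | zero => simp
    | succ k =>
      rw [itinerary_succ, List.length_cons]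
      have := ih _ (Nat.sub_lt k.succ_pos (len (sel x)).pos) (f^[len (sel x)] x)
      have := (len (sel x)).pos
      omega

theorem sum_map_itinerary_le {L : ℕ} (hL : ∀ a, (len a : ℕ) ≤ L) (n : ℕ) (x : X) :
    ((itinerary f len sel n x).map fun a => (len a : ℕ)).sum ≤ n + L := by
  induction n using Nat.strong_induction_on generalizing x with
  | _ n ih =>
    cases n with
    | zero => simp
    | succ k =>
      rw [itinerary_succ, List.map_cons, List.sum_cons]
      obtain hle | hlt := le_or_gt (len (sel x) : ℕ) (k + 1)
      · have := ih _ (Nat.sub_lt k.succ_pos (len (sel x)).pos) (f^[len (sel x)] x)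
        omega
      · rw [Nat.sub_eq_zero_of_le hlt.le, itinerary_zero]
        have := hL (sel x)
        simp only [List.map_nil, List.sum_nil]
        omega

theorem countP_itinerary_le_birkhoffSum {p : A → Bool} {D : Set X}
    (hD : ∀ z, p (sel z) → z ∈ D) (n : ℕ) (x : X) :
    (itinerary f len sel n x).countP p ≤ birkhoffSum f (D.indicator 1) n x := by
  induction n using Nat.strong_induction_on generalizing x with
  | _ n ih =>
    cases n with
    | zero => simp
    | succ k =>
      rw [itinerary_succ, List.countP_cons]
      refine le_trans ?_ (add_birkhoffSum_sub_le f _ k.succ_pos (len (sel x)).pos x)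
      rw [add_comm]
      gcongr
      · split_ifs with h
        · simp [hD x h]
        · exact Nat.zero_le _
      · exact ih _ (Nat.sub_lt k.succ_pos (len (sel x)).pos) _

theorem mem_bowenBall_of_itinerary_eq [MetricSpace X] {center : A → X} {ρ : ℝ}
    (hsel : ∀ z, z ∈ bowenBall f (len (sel z)) ρ (center (sel z))) {n : ℕ} {x y : X}
    (hxy : itinerary f len sel n x = itinerary f len sel n y) :
    y ∈ bowenBall f n (2 * ρ) x := by
  induction n using Nat.strong_induction_on generalizing x y with
  | _ n ih =>
    cases n with
    | zero => simp [bowenBall]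
    | succ k =>
      rw [itinerary_succ, itinerary_succ, List.cons.injEq] at hxy
      obtain ⟨hsel_eq, htail⟩ := hxy
      set l : ℕ := (len (sel x) : ℕ)
      intro i hi
      obtain hil | hli := lt_or_ge i l
      · have hy := hsel y
        rw [← hsel_eq] at hy
        exact dist_iterate_lt_of_mem_bowenBall (hsel x) hy hil
      · rw [← hsel_eq] at htail
        obtain ⟨j, rfl⟩ := Nat.exists_eq_add_of_le hli
        have := ih _ (Nat.sub_lt k.succ_pos (len (sel x)).pos) htail j (by omega)
        rwa [← Function.iterate_add_apply, ← Function.iterate_add_apply, add_comm j] at this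

end Itinerary

theorem sum_prod_map_le_of_length_le {A : Type*} [Fintype A] {u : A → ℝ} (hu0 : ∀ a, 0 ≤ u a)
    (hu1 : ∑ a, u a ≤ 1) {n : ℕ} (S : Finset (List A)) (hS : ∀ w ∈ S, w.length ≤ n) :
    ∑ w ∈ S, (w.map u).prod ≤ n + 1 := by
  classical
  have hwords (k : ℕ) : ∑ w ∈ S with w.length = k, (w.map u).prod ≤ (∑ a, u a) ^ k := by
    calc ∑ w ∈ S with w.length = k, (w.map u).prod
        ≤ ∑ w ∈ Finset.univ.image (List.ofFn : (Fin k → A) → List A), (w.map u).prod := by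
          refine Finset.sum_le_sum_of_subset_of_nonneg (fun w hw => ?_)
            fun w _ _ => List.prod_nonneg (by simpa using fun a _ => hu0 a)
          obtain ⟨-, rfl⟩ := Finset.mem_filter.1 hw
          exact Finset.mem_image.2 ⟨w.get, Finset.mem_univ _, List.ofFn_get w⟩
      _ = (∑ a, u a) ^ k := by
          rw [Finset.sum_image fun g _ g' _ h => List.ofFn_injective h, Fintype.sum_pow]
          simp [List.map_ofFn, List.prod_ofFn]
  calc ∑ w ∈ S, (w.map u).prod
      = ∑ k ∈ Finset.range (n + 1), ∑ w ∈ S with w.length = k, (w.map u).prod :=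
        (Finset.sum_fiberwise_of_maps_to
          (fun w hw => Finset.mem_range.2 (Nat.lt_succ_of_le (hS w hw))) _).symm
    _ ≤ ∑ _k ∈ Finset.range (n + 1), (1 : ℝ) := Finset.sum_le_sum fun k _ =>
        (hwords k).trans (pow_le_one₀ (Finset.sum_nonneg fun a _ => hu0 a) hu1)
    _ = n + 1 := by simp

theorem prod_map_ite_mul_exp {A : Type*} (p : A → Bool) (r h : ℝ) (ℓ : A → ℕ) (w : List A) :
    (w.map fun a => (if p a then r else 1) * Real.exp (-h * ℓ a)).prod =
      r ^ w.countP p * Real.exp (-h * (w.map ℓ).sum) := by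
  induction w with
  | nil => simp
  | cons a w ih =>
    rw [List.map_cons, List.prod_cons, ih, List.countP_cons, List.map_cons, List.sum_cons]
    split_ifs <;> simp [pow_succ, Real.exp_add, mul_add] <;> ring

theorem Finset.nonempty_of_univ_subset_biUnion {X Y : Type*} [Nonempty X] {T : Finset Y}
    {U : Y → Set X} (hT : (Set.univ : Set X) ⊆ ⋃ w ∈ T, U w) : T.Nonempty := by
  obtain ⟨w, hw, -⟩ := mem_iUnion₂.1 (hT (Set.mem_univ (Classical.arbitrary X)))
  exact ⟨w, hw⟩

theorem sum_ite_mul_exp_le_one {X ι : Type*} {T : Finset X} {h : ℝ} (hh : 0 ≤ h) [Fintype ι]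
    {m : ι → ℕ+} (hm : ∑ i, Real.exp (-h * m i) ≤ 1 / 2) :
    ∑ a : ι ⊕ T, (if a.isRight then (2 * T.card : ℝ)⁻¹ else 1) *
      Real.exp (-h * (Sum.elim m 1 a : ℕ+)) ≤ 1 := by
  have hT : ∑ _w : T, (2 * T.card : ℝ)⁻¹ * Real.exp (-h) ≤ 1 / 2 := by
    rw [Finset.sum_const, Finset.card_univ, Fintype.card_coe, nsmul_eq_mul]
    calc T.card * ((2 * T.card : ℝ)⁻¹ * Real.exp (-h)) ≤ T.card * (2 * T.card : ℝ)⁻¹ := by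
          gcongr
          exact mul_le_of_le_one_right (by positivity) (Real.exp_le_one_iff.2 (by linarith))
      _ ≤ 1 / 2 := by
          rw [mul_inv, mul_left_comm, one_div]
          exact mul_le_of_le_one_right (by norm_num) mul_inv_le_one
  calc _ = ∑ i, Real.exp (-h * m i) + ∑ _w : T, (2 * T.card : ℝ)⁻¹ * Real.exp (-h) := by
        simp [Fintype.sum_sum_type]
    _ ≤ 1 := by linarith

section Cover

variable {X A ι : Type*} [MetricSpace X] {f : X → X} {len : A → ℕ+} {sel : X → A} {ρ : ℝ}
  {T : Finset X}

theorem exists_cover_of_le_prod_itinerary [Fintype A] {center : A → X}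
    (hsel : ∀ z, z ∈ bowenBall f (len (sel z)) ρ (center (sel z))) {u : A → ℝ}
    (hu0 : ∀ a, 0 ≤ u a) (hu1 : ∑ a, u a ≤ 1) (n : ℕ) (κ : ℝ) :
    ∃ (M : ℕ) (y : Fin M → X), M * κ ≤ n + 1 ∧
      {x | κ ≤ ((itinerary f len sel n x).map u).prod} ⊆ ⋃ j, bowenBall f n (2 * ρ) (y j) := by
  set W := {w : List A | ∃ x, κ ≤ (w.map u).prod ∧ itinerary f len sel n x = w}
  have hW : W.Finite := (List.finite_length_le A n).subset <| by
    rintro _ ⟨x, -, rfl⟩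
    exact length_itinerary_le n x
  set e := hW.toFinset.equivFin
  have hrep (j : Fin hW.toFinset.card) : (e.symm j : List A) ∈ W :=
    hW.mem_toFinset.1 (e.symm j).2
  refine ⟨hW.toFinset.card, fun j => (hrep j).choose, ?_, fun x hx => ?_⟩
  · calc (hW.toFinset.card : ℝ) * κ = hW.toFinset.card • κ := (nsmul_eq_mul _ _).symm
      _ ≤ ∑ w ∈ hW.toFinset, (w.map u).prod := Finset.card_nsmul_le_sum _ _ _ fun w hw => by
          obtain ⟨x, hκ, -⟩ := hW.mem_toFinset.1 hw
          exact hκ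
      _ ≤ n + 1 := sum_prod_map_le_of_length_le hu0 hu1 _ fun w hw => by
          obtain ⟨x, -, rfl⟩ := hW.mem_toFinset.1 hw
          exact length_itinerary_le n x
  · have hxW : itinerary f len sel n x ∈ hW.toFinset := hW.mem_toFinset.2 ⟨x, hx, rfl⟩
    refine mem_iUnion.2 ⟨e ⟨_, hxW⟩, mem_bowenBall_of_itinerary_eq hsel ?_⟩
    rw [(hrep _).choose_spec.2, Equiv.symm_apply_apply]

theorem exists_choice_mem_bowenBall (hT : (univ : Set X) ⊆ ⋃ w ∈ T, Metric.ball w ρ)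
    (c : ι → X) (m : ι → ℕ+) :
    ∃ sel : X → ι ⊕ T, ∀ z,
      z ∈ bowenBall f (Sum.elim m 1 (sel z) : ℕ+) ρ (Sum.elim c (↑) (sel z)) ∧
      ((sel z).isRight → z ∈ (⋃ i, bowenBall f (m i) ρ (c i))ᶜ) := by
  classical
  have hball (z : X) : ∃ w : T, dist (w : X) z < ρ := by
    obtain ⟨w, hw, hzw⟩ := mem_iUnion₂.1 (hT (mem_univ z))
    exact ⟨⟨w, hw⟩, by rwa [dist_comm]⟩
  refine ⟨fun z => if hz : ∃ i, z ∈ bowenBall f (m i) ρ (c i) then .inl hz.choose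
    else .inr (hball z).choose, fun z => ?_⟩
  by_cases hz : ∃ i, z ∈ bowenBall f (m i) ρ (c i)
  · simpa [hz] using hz.choose_spec
  · simpa [hz, not_exists.1 hz, mem_bowenBall_one] using (hball z).choose_spec

theorem exists_cover_of_birkhoffSum_le [Nonempty X] {h : ℝ} (hh : 0 ≤ h)
    (hT : (univ : Set X) ⊆ ⋃ w ∈ T, Metric.ball w ρ) [Fintype ι] (c : ι → X) (m : ι → ℕ+)
    (hm : ∑ i, Real.exp (-h * m i) ≤ 1 / 2) :
    ∃ L : ℕ, ∀ n d : ℕ, ∃ (M : ℕ) (y : Fin M → X),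
      (M : ℝ) ≤ (n + 1) * (2 * T.card) ^ d * Real.exp (h * (n + L)) ∧
      {x | birkhoffSum f ((⋃ i, bowenBall f (m i) ρ (c i))ᶜ.indicator 1) n x ≤ d} ⊆
        ⋃ j, bowenBall f n (2 * ρ) (y j) := by
  obtain ⟨sel, hsel⟩ := exists_choice_mem_bowenBall (f := f) hT c m
  set len : ι ⊕ T → ℕ+ := Sum.elim m 1
  set r : ℝ := (2 * T.card)⁻¹
  have hP : (1 : ℝ) ≤ T.card := by
    exact_mod_cast (Finset.nonempty_of_univ_subset_biUnion hT).card_pos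
  have hr0 : 0 < r := by positivity
  have hr1 : r ≤ 1 := inv_le_one_of_one_le₀ (by linarith)
  set L := Finset.univ.sup fun a => (len a : ℕ)
  refine ⟨L, fun n d => ?_⟩
  set κ := r ^ d * Real.exp (-h * (n + L))
  have hκ : 0 < κ := by positivity
  obtain ⟨M, y, hM, hy⟩ := exists_cover_of_le_prod_itinerary (fun z => (hsel z).1)
    (fun a => by positivity) (sum_ite_mul_exp_le_one hh hm) n κ
  refine ⟨M, y, ?_, fun x hx => hy ?_⟩
  · calc (M : ℝ) ≤ (n + 1) / κ := (le_div_iff₀ hκ).2 hM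
      _ = (n + 1) * (2 * T.card) ^ d * Real.exp (h * (n + L)) := by
        simp only [κ, r, inv_pow, neg_mul, Real.exp_neg]
        field_simp
  · have hcount :=
      (countP_itinerary_le_birkhoffSum (len := len) (fun z => (hsel z).2) n x).trans hx
    have hsum := sum_map_itinerary_le (f := f) (sel := sel)
      (fun a => Finset.le_sup (f := fun a => (len a : ℕ)) (Finset.mem_univ a)) n x
    simp only [mem_ofPred_eq]
    rw [prod_map_ite_mul_exp]
    apply mul_le_mul (pow_le_pow_of_le_one hr0.le hr1 hcount) _ (by positivity) (by positivity)
    refine Real.exp_le_exp.2 (mul_le_mul_of_nonpos_left ?_ (neg_nonpos.2 hh))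
    exact_mod_cast hsum

end Cover

section Visits

variable {X : Type*} [MeasurableSpace X] {f : X → X} {ν : Measure X} {D : Set X}

theorem mul_measure_lt_birkhoffSum_indicator_le (hf : MeasurePreserving f ν ν)
    (hD : MeasurableSet D) (n d : ℕ) :
    (d + 1 : ℝ≥0∞) * ν {x | d < birkhoffSum f (D.indicator 1) n x} ≤ n * ν D := by
  have hmeas (k : ℕ) : MeasurableSet (f^[k] ⁻¹' D) := hf.measurable.iterate k hD
  have hcast (x : X) : ((birkhoffSum f (D.indicator 1) n x : ℕ) : ℝ≥0∞) =
      ∑ k ∈ Finset.range n, (f^[k] ⁻¹' D).indicator 1 x := by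
    simp only [birkhoffSum, Nat.cast_sum]
    refine Finset.sum_congr rfl fun k _ => ?_
    by_cases h : f^[k] x ∈ D <;> simp [h]
  calc (d + 1 : ℝ≥0∞) * ν {x | d < birkhoffSum f (D.indicator 1) n x}
      = (d + 1 : ℝ≥0∞) * ν {x | (d + 1 : ℝ≥0∞) ≤ (birkhoffSum f (D.indicator 1) n x : ℕ)} := by
        congr 2
        ext x
        simp only [mem_ofPred_eq]
        norm_cast
    _ ≤ ∫⁻ x, ((birkhoffSum f (D.indicator 1) n x : ℕ) : ℝ≥0∞) ∂ν := by
        refine mul_meas_ge_le_lintegral ?_ _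
        simp_rw [hcast]
        exact Finset.measurable_sum _ fun k _ => measurable_one.indicator (hmeas k)
    _ = n * ν D := by
        simp_rw [hcast]
        rw [lintegral_finsetSum _ fun k _ => measurable_one.indicator (hmeas k)]
        simp [lintegral_indicator_one (hmeas _),
          (hf.iterate _).measure_preimage hD.nullMeasurableSet]

theorem ofReal_le_measure_birkhoffSum_indicator_le [IsProbabilityMeasure ν]
    (hf : MeasurePreserving f ν ν) (hD : MeasurableSet D) {δ a : ℝ} (hδ : δ ≤ 1)
    (hνD : ν D ≤ ENNReal.ofReal ((1 - δ) * a)) (n : ℕ) :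
    ENNReal.ofReal δ ≤ ν {x | birkhoffSum f (D.indicator 1) n x ≤ ⌈a * n⌉₊} := by
  set d := ⌈a * n⌉₊
  set G := {x | birkhoffSum f (D.indicator 1) n x ≤ d}
  have hGc : Gᶜ = {x | d < birkhoffSum f (D.indicator 1) n x} := by
    ext x
    simp [G]
  have hbad : ν Gᶜ ≤ ENNReal.ofReal (1 - δ) := by
    refine (ENNReal.mul_le_mul_iff_right (a := (d + 1 : ℝ≥0∞)) (by simp) (by simp)).1 ?_
    calc (d + 1 : ℝ≥0∞) * ν Gᶜ ≤ n * ν D :=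
          hGc ▸ mul_measure_lt_birkhoffSum_indicator_le hf hD n d
      _ ≤ n * ENNReal.ofReal ((1 - δ) * a) := by gcongr
      _ = ENNReal.ofReal ((1 - δ) * (a * n)) := by
          rw [← ENNReal.ofReal_natCast, ← ENNReal.ofReal_mul (Nat.cast_nonneg n)]
          ring_nf
      _ ≤ ENNReal.ofReal ((1 - δ) * (d + 1)) := by
          have := Nat.le_ceil (a * n)
          gcongr
          · linarith
      _ = (d + 1 : ℝ≥0∞) * ENNReal.ofReal (1 - δ) := by
          rw [mul_comm, ENNReal.ofReal_mul' (by positivity)]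
          norm_cast
  have hunion : 1 ≤ ν G + ν Gᶜ := by
    rw [← measure_univ (μ := ν), ← union_compl_self G]
    exact measure_union_le _ _
  calc ENNReal.ofReal δ = 1 - ENNReal.ofReal (1 - δ) := by
        rw [← ENNReal.ofReal_one, ← ENNReal.ofReal_sub _ (by linarith), sub_sub_cancel]
    _ ≤ ν G := tsub_le_iff_right.2 (hunion.trans (by gcongr))

end Visits

theorem exists_measure_compl_iUnion_fin_le {α : Type*} [MeasurableSpace α] {μ : Measure α}
    [IsProbabilityMeasure μ] {s : ℕ → Set α} (hs : ∀ i, MeasurableSet (s i))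
    (h1 : μ (⋃ i, s i) = 1) {β : ℝ≥0∞} (hβ : 0 < β) : ∃ I, μ (⋃ i : Fin I, s i)ᶜ ≤ β := by
  have hlim := tendsto_measure_iUnion_accumulate (μ := μ) (f := s)
  rw [h1] at hlim
  obtain ⟨I, hI⟩ := (hlim.eventually (eventually_gt_nhds
    (ENNReal.sub_lt_self ENNReal.one_ne_top one_ne_zero hβ.ne'))).exists
  refine ⟨I + 1, ?_⟩
  have hacc : ⋃ i : Fin (I + 1), s i = accumulate s I := by
    ext x
    simp [accumulate_def, Fin.exists_iff]
  rw [prob_compl_eq_one_sub (.iUnion fun i : Fin (I + 1) => hs i), hacc]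
  exact tsub_le_iff_right.2 ((tsub_le_iff_right.1 hI.le).trans_eq (add_comm _ _))

section Entropy

variable {X : Type*} [MetricSpace X] {f : X → X}

theorem exists_bowenCover_of_mBowen_eq_zero {ε h : ℝ} {Y : Set X} (hY : mBowen f ε h Y = 0) :
    ∃ (c : ℕ → X) (m : ℕ → ℕ+), Y ⊆ ⋃ i, bowenBall f (m i) ε (c i) ∧
      ∀ s : Finset ℕ, ∑ i ∈ s, Real.exp (-h * m i) ≤ 1 / 2 := by
  unfold mBowen at hY
  obtain ⟨_, ⟨c, m, hm, hcov, rfl⟩, hlt⟩ :=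
    sInf_lt_iff.1 ((ENNReal.iSup_eq_zero.1 hY 1).trans_lt (by norm_num : (0 : ℝ≥0∞) < 1 / 2))
  refine ⟨c, fun i => ⟨m i, hm i⟩, hcov, fun s => ?_⟩
  have hs := (ENNReal.sum_le_tsum s).trans hlt.le
  rw [← ENNReal.ofReal_sum_of_nonneg fun i _ => (Real.exp_pos _).le] at hs
  exact (ENNReal.ofReal_le_ofReal_iff (by norm_num)).1
    (hs.trans_eq (by norm_num [ENNReal.ofReal_div_of_pos]))

variable [MeasurableSpace X] [BorelSpace X] {ν : Measure X}

theorem exists_spanCount_le [Nonempty X] [IsProbabilityMeasure ν] (hf : Continuous f)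
    (hν : MeasurePreserving f ν ν) {δ a ρ h : ℝ} (hδ : δ ∈ Ioo 0 1) (hh : 0 ≤ h) {T : Finset X}
    (hT : (univ : Set X) ⊆ ⋃ w ∈ T, Metric.ball w ρ) {ι : Type*} [Fintype ι] (c : ι → X)
    (m : ι → ℕ+) (hm : ∑ i, Real.exp (-h * m i) ≤ 1 / 2)
    (hD : ν (⋃ i, bowenBall f (m i) ρ (c i))ᶜ ≤ ENNReal.ofReal ((1 - δ) * a)) :
    ∃ L : ℕ, ∀ n : ℕ, 0 < spanCount f ν n (2 * ρ) δ ∧ (spanCount f ν n (2 * ρ) δ : ℝ) ≤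
      (n + 1) * (2 * T.card) ^ ⌈a * n⌉₊ * Real.exp (h * (n + L)) := by
  obtain ⟨L, hL⟩ := exists_cover_of_birkhoffSum_le (f := f) hh hT c m hm
  refine ⟨L, fun n => ?_⟩
  obtain ⟨M, y, hM, hy⟩ := hL n ⌈a * n⌉₊
  have hDmeas : MeasurableSet (⋃ i, bowenBall f (m i) ρ (c i))ᶜ :=
    (MeasurableSet.iUnion fun i => (isOpen_bowenBall hf _).measurableSet).compl
  have hcover : ENNReal.ofReal δ ≤ ν (⋃ j, bowenBall f n (2 * ρ) (y j)) :=
    (ofReal_le_measure_birkhoffSum_indicator_le hν hDmeas hδ.2.le hD n).trans (measure_mono hy)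
  exact ⟨spanCount_pos hδ.1 hcover, (Nat.cast_le.2 (spanCount_le hcover)).trans hM⟩

theorem limsup_inv_mul_log_le {s : ℕ → ℝ} {a b : ℝ}
    (hs : ∀ᶠ n : ℕ in atTop, Real.log (s n) ≤ Real.log (n + 1) + a * n + b) :
    limsup (fun n : ℕ => (((n : ℝ)⁻¹ * Real.log (s n) : ℝ) : EReal)) atTop ≤ a := by
  have hlog : Tendsto (fun n : ℕ => Real.log (n + 1) / n) atTop (𝓝 0) := by
    simpa [Function.comp_def] using
      (Real.tendsto_pow_log_div_mul_add_atTop 1 (-1) 1 one_ne_zero).comp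
        (tendsto_atTop_add_const_right _ 1 tendsto_natCast_atTop_atTop)
  have hlim : Tendsto (fun n : ℕ => a + (Real.log (n + 1) / n + b / n)) atTop (𝓝 a) := by
    simpa using tendsto_const_nhds.add (hlog.add (tendsto_const_div_atTop_nhds_zero_nat b))
  calc limsup (fun n : ℕ => (((n : ℝ)⁻¹ * Real.log (s n) : ℝ) : EReal)) atTop
      ≤ limsup (fun n : ℕ => ((a + (Real.log (n + 1) / n + b / n) : ℝ) : EReal)) atTop := by
        refine limsup_le_limsup ?_
        filter_upwards [hs, eventually_gt_atTop 0] with n hn hn0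
        have hn0' : (0 : ℝ) < n := Nat.cast_pos.2 hn0
        refine EReal.coe_le_coe_iff.2 ((inv_mul_le_iff₀ hn0').2 (hn.trans_eq ?_))
        field_simp
        ring
    _ = a := (EReal.tendsto_coe.2 hlim).limsup_eq

theorem exists_log_spanCount_le [Nonempty X] [IsProbabilityMeasure ν] (hf : Continuous f)
    (hν : MeasurePreserving f ν ν) {δ ρ h r : ℝ} (hδ : δ ∈ Ioo 0 1) (hh : 0 ≤ h) (hr : h < r)
    {T : Finset X} (hT : (univ : Set X) ⊆ ⋃ w ∈ T, Metric.ball w ρ) {c : ℕ → X} {m : ℕ → ℕ+}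
    (hcov : ν (⋃ i, bowenBall f (m i) ρ (c i)) = 1)
    (hsum : ∀ s : Finset ℕ, ∑ i ∈ s, Real.exp (-h * m i) ≤ 1 / 2) :
    ∃ b : ℝ, ∀ n : ℕ,
      Real.log (spanCount f ν n (2 * ρ) δ) ≤ Real.log (n + 1) + r * n + b := by
  have hP : (1 : ℝ) ≤ T.card := by
    exact_mod_cast (Finset.nonempty_of_univ_subset_biUnion hT).card_pos
  have hlogP : 0 < Real.log (2 * T.card) := Real.log_pos (by linarith)
  -- the admissible frequency of visits to the part left uncovered by a finite subfamily
  set a := (r - h) / Real.log (2 * T.card)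
  have ha : 0 < a := div_pos (sub_pos.2 hr) hlogP
  have haP : a * Real.log (2 * T.card) = r - h := div_mul_cancel₀ _ hlogP.ne'
  obtain ⟨I, hI⟩ := exists_measure_compl_iUnion_fin_le
    (fun i => (isOpen_bowenBall hf (c i) (n := m i) (ε := ρ)).measurableSet) hcov
    (ENNReal.ofReal_pos.2 (mul_pos (sub_pos.2 hδ.2) ha))
  obtain ⟨L, hL⟩ := exists_spanCount_le hf hν hδ hh hT (fun i : Fin I => c i) (fun i => m i)
    (by simpa only [Fin.sum_univ_eq_sum_range (fun i => Real.exp (-h * m i))] using hsum _) hI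
  refine ⟨Real.log (2 * T.card) + h * L, fun n => ?_⟩
  obtain ⟨hpos, hle⟩ := hL n
  have hd : (⌈a * n⌉₊ : ℝ) ≤ a * n + 1 := (Nat.ceil_lt_add_one (by positivity)).le
  calc Real.log (spanCount f ν n (2 * ρ) δ)
      ≤ Real.log ((n + 1) * (2 * T.card) ^ ⌈a * n⌉₊ * Real.exp (h * (n + L))) :=
        Real.log_le_log (Nat.cast_pos.2 hpos) hle
    _ = Real.log (n + 1) + ⌈a * n⌉₊ * Real.log (2 * T.card) + h * (n + L) := by
        rw [Real.log_mul (by positivity) (by positivity), Real.log_mul (by positivity)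
          (by positivity), Real.log_pow, Real.log_exp]
    _ ≤ Real.log (n + 1) + r * n + (Real.log (2 * T.card) + h * L) := by
        nlinarith

theorem limsup_log_spanCount_le_of_mBowen_eq_zero [CompactSpace X] (hf : Continuous f)
    [IsProbabilityMeasure ν] (hν : MeasurePreserving f ν ν) {R : Set X} (hR : ν R = 1) {δ : ℝ}
    (hδ : δ ∈ Ioo 0 1) {ε h : ℝ} (hε : 0 < ε) (hmB : mBowen f (ε / 2) h R = 0) :
    limsup (fun n : ℕ => (((n : ℝ)⁻¹ * Real.log (spanCount f ν n ε δ) : ℝ) : EReal)) atTop ≤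
      h := by
  have := nonempty_of_isProbabilityMeasure ν
  obtain ⟨c, m, hcov, hsum⟩ := exists_bowenCover_of_mBowen_eq_zero hmB
  have hh : 0 < h := by
    have := (hsum {0}).trans_lt (by norm_num : (1 : ℝ) / 2 < 1)
    rw [Finset.sum_singleton, Real.exp_lt_one_iff] at this
    exact pos_of_mul_pos_left (by linarith) (Nat.cast_nonneg _)
  obtain ⟨T, hT⟩ := isCompact_univ.elim_finite_subcover (fun x : X => Metric.ball x (ε / 2))
    (fun _ => Metric.isOpen_ball) fun x _ => mem_iUnion.2 ⟨x, Metric.mem_ball_self (half_pos hε)⟩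
  refine EReal.le_of_forall_lt_iff_le.1 fun r hr => ?_
  obtain ⟨b, hb⟩ := exists_log_spanCount_le hf hν hδ hh.le (EReal.coe_lt_coe_iff.1 hr) hT
    (le_antisymm prob_le_one (hR ▸ measure_mono hcov)) hsum
  rw [mul_div_cancel₀ ε two_ne_zero] at hb
  exact limsup_inv_mul_log_le (Eventually.of_forall hb)

end Entropy

theorem katokEntropy_le_bowenEntropy_of_full_measure_general {X : Type*} [MetricSpace X]
    [CompactSpace X] [MeasurableSpace X] [BorelSpace X] (f : X ≃ₜ X)
    (ν : Measure X) [IsProbabilityMeasure ν] (herg : Ergodic (⇑f) ν)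
    (R : Set X) (hfull : ν R = 1)
    (δ : ℝ) (hδ : δ ∈ Set.Ioo (0 : ℝ) 1) :
    katokEntropy (⇑f) ν δ ≤ bowenEntropy (⇑f) R := by
  refine iSup₂_le fun ε hε => le_iSup₂_of_le (ε / 2) (half_pos hε) (le_sInf ?_)
  rintro _ ⟨h, hh, rfl⟩
  exact limsup_log_spanCount_le_of_mBowen_eq_zero f.continuous herg.toMeasurePreserving hfull hδ
    hε hh

/-- **Entropy of measures supported on an invariant set**: if `ν` is an `f`-invariant ergodic
Borel probability measure with `ν R = 1` for an `f`-invariant set `R`, then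
`h_ν(f) ≤ h_top(f, R)`, where `h_top` is Bowen's dimension-like topological entropy and
`h_ν(f)` is Katok's metric entropy (with any parameter `δ ∈ (0,1)`). -/
theorem katokEntropy_le_bowenEntropy_of_full_measure {X : Type*} [MetricSpace X]
    [CompactSpace X] [MeasurableSpace X] [BorelSpace X] (f : X ≃ₜ X)
    (ν : Measure X) [IsProbabilityMeasure ν] (herg : Ergodic (⇑f) ν)
    (R : Set X) (hR : MeasurableSet R) (hinv : ⇑f '' R = R) (hfull : ν R = 1)
    (δ : ℝ) (hδ : δ ∈ Set.Ioo (0 : ℝ) 1) :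
    katokEntropy (⇑f) ν δ ≤ bowenEntropy (⇑f) R :=
  katokEntropy_le_bowenEntropy_of_full_measure_general f ν herg R hfull δ hδ
end
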